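/- For every decay factor a∈[0,1), PageRank PR^a, defined on the class 𝒢 of all graphs, satisfies Locality (LOC), Edge Deletion (ED), Node Combination (NC), Edge Multiplication (EM) and Baseline (BL). -/

import Mathlib

open Filter

attribute [local instance] Classical.propDecidable

/-- A (directed, weighted) graph `G=(V,E,b,c)`: a finite set of nodes `V ⊆ ℕ`,
a set of directed edges `E ⊆ V × V` (self-loops allowed), node weights `b` and
edge weights `c` (stored as total functions, zero outside `V` resp. `E`). -/
structure PRGraph where
  V : Finset ℕ
  E : Finset (ℕ × ℕ)
  b : ℕ → ℝ
  c : ℕ × ℕ → ℝ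

namespace PRGraph

/-- Well-formedness of a graph: edges connect nodes, node weights are nonnegative,
edge weights are positive, and the weight functions vanish outside `V` resp. `E`. -/
def Valid (G : PRGraph) : Prop :=
  (∀ e ∈ G.E, e.1 ∈ G.V ∧ e.2 ∈ G.V) ∧
  (∀ v, 0 ≤ G.b v) ∧ (∀ v, v ∉ G.V → G.b v = 0) ∧
  (∀ e ∈ G.E, 0 < G.c e) ∧ (∀ e, e ∉ G.E → G.c e = 0)

/-- Out-degree `deg⁺_v(G)`: the total weight of outgoing edges of `v`. -/
noncomputable def degOut (G : PRGraph) (v : ℕ) : ℝ :=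
  ∑ e ∈ G.E.filter (fun e => e.1 = v), G.c e

/-- `ω` is a walk of length `t ≥ 1` in `G`. -/
def IsWalk (G : PRGraph) (t : ℕ) (ω : ℕ → ℕ) : Prop :=
  1 ≤ t ∧ ∀ i < t, (ω i, ω (i + 1)) ∈ G.E

/-- `v` is a successor of `u` (and `u` a predecessor of `v`):
some walk starts at `u` and ends at `v`. -/
def Succ (G : PRGraph) (u v : ℕ) : Prop :=
  ∃ t ω, G.IsWalk t ω ∧ ω 0 = u ∧ ω t = v

/-- `G` is strongly connected: `S(v) = V` for every node `v`. -/
def StronglyConnected (G : PRGraph) : Prop :=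
  ∀ u ∈ G.V, ∀ v ∈ G.V, G.Succ u v

/-- Membership in the class `𝒢^KP` of (disjoint) sums of strongly connected graphs,
characterized by: every node lies on a cycle, and the start of every edge
is reachable back from its end. -/
def InGKP (G : PRGraph) : Prop :=
  G.Valid ∧ (∀ v ∈ G.V, G.Succ v v) ∧ (∀ e ∈ G.E, G.Succ e.2 e.1)

/-- The adjacency matrix of `G`: `A_{u,v} = c(v,u)` if `(v,u) ∈ E` and `0` otherwise. -/
noncomputable def adjMatrix (G : PRGraph) : Matrix {v // v ∈ G.V} {v // v ∈ G.V} ℝ :=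
  fun u v => if ((v : ℕ), (u : ℕ)) ∈ G.E then G.c ((v : ℕ), (u : ℕ)) else 0

/-- The principal eigenvalue `λ`: the largest real eigenvalue of the adjacency matrix. -/
noncomputable def principalEig (G : PRGraph) : ℝ :=
  sSup {r : ℝ | ∃ x : {v // v ∈ G.V} → ℝ, x ≠ 0 ∧ G.adjMatrix.mulVec x = r • x}

/-- The strongly connected component of `v` (as an induced subgraph),
for graphs in `𝒢^KP`. -/
noncomputable def component (G : PRGraph) (v : ℕ) : PRGraph where
  V := G.V.filter (fun u => G.Succ v u)
  E := G.E.filter (fun e => G.Succ v e.1 ∧ G.Succ v e.2)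
  b := fun u => if u ∈ G.V ∧ G.Succ v u then G.b u else 0
  c := fun e => if e ∈ G.E ∧ G.Succ v e.1 ∧ G.Succ v e.2 then G.c e else 0

/-- Membership in the class `𝒢^EV` of sums of strongly connected graphs
all having the same principal eigenvalue. -/
def InGEV (G : PRGraph) : Prop :=
  G.InGKP ∧ ∀ v ∈ G.V, (G.component v).principalEig = G.principalEig

/-- Membership in the class `𝒢^{K(a)}` of graphs whose principal eigenvalue
satisfies `λ < 1/a` (expressed as `a * λ < 1`). -/
def InGK (a : ℝ) (G : PRGraph) : Prop := G.Valid ∧ a * G.principalEig < 1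

/-- `G` is `x`-out-regular for some `x > 0`. -/
def OutRegular (G : PRGraph) : Prop :=
  ∃ x : ℝ, 0 < x ∧ ∀ v ∈ G.V, G.degOut v = x

/-- `G` is semi-out-regular: every node has out-degree `r` or `0`, for some fixed `r > 0`. -/
def SemiOutRegular (G : PRGraph) : Prop :=
  ∃ r : ℝ, 0 < r ∧ ∀ v ∈ G.V, G.degOut v = r ∨ G.degOut v = 0

/-- The distributed process: `p^a_{v,G}(t)` is the sum, over all walks `ω` of length `t`
ending at `v`, of `b(ω(0)) · ∏_{i<t} a·c(ω(i),ω(i+1))/deg⁺_{ω(i)}(G)`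
(for `t = 0` this is `b(v)` for `v ∈ V`). -/
noncomputable def pProc (a : ℝ) (G : PRGraph) (t : ℕ) (v : ℕ) : ℝ :=
  ∑ ω ∈ (Fintype.piFinset (fun _ : Fin (t + 1) => G.V)).filter
      (fun ω => ω (Fin.last t) = v ∧ ∀ i : Fin t, (ω i.castSucc, ω i.succ) ∈ G.E),
    G.b (ω 0) * ∏ i : Fin t,
      a * G.c (ω i.castSucc, ω i.succ) / G.degOut (ω i.castSucc)

/-- The parallel process: `w^a_{v,G}(t)` is the sum, over all walks `ω` of length `t`
ending at `v`, of `b(ω(0)) · ∏_{i<t} a·c(ω(i),ω(i+1))`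
(for `t = 0` this is `b(v)` for `v ∈ V`). -/
noncomputable def wProc (a : ℝ) (G : PRGraph) (t : ℕ) (v : ℕ) : ℝ :=
  ∑ ω ∈ (Fintype.piFinset (fun _ : Fin (t + 1) => G.V)).filter
      (fun ω => ω (Fin.last t) = v ∧ ∀ i : Fin t, (ω i.castSucc, ω i.succ) ∈ G.E),
    G.b (ω 0) * ∏ i : Fin t, a * G.c (ω i.castSucc, ω i.succ)

/-- PageRank with decay factor `a`: `PR^a_v(G) = Σ_{t=0}^∞ p^a_{v,G}(t)`. -/
noncomputable def PageRank (a : ℝ) (G : PRGraph) (v : ℕ) : ℝ := ∑' t : ℕ, pProc a G t v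

/-- Katz centrality with decay factor `a`: `K^a_v(G) = Σ_{t=0}^∞ w^a_{v,G}(t)`. -/
noncomputable def Katz (a : ℝ) (G : PRGraph) (v : ℕ) : ℝ := ∑' t : ℕ, wProc a G t v

/-- Katz prestige: the Cesàro limit `KP_v(G) = lim_{T→∞} Σ_{t=0}^T p^1_{v,G}(t)/T`. -/
noncomputable def KP (G : PRGraph) (v : ℕ) : ℝ :=
  limUnder atTop (fun T : ℕ => (∑ t ∈ Finset.range (T + 1), pProc 1 G t v) / (T : ℝ))

/-- Eigenvector centrality: the Cesàro limit
`EV_v(G) = lim_{T→∞} Σ_{t=0}^T w^{1/λ}_{v,G}(t)/T`. -/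
noncomputable def EV (G : PRGraph) (v : ℕ) : ℝ :=
  limUnder atTop
    (fun T : ℕ => (∑ t ∈ Finset.range (T + 1), wProc (1 / G.principalEig) G t v) / (T : ℝ))

/-- The sum `G + G'` of two graphs (intended for disjoint node sets). -/
noncomputable def gsum (G G' : PRGraph) : PRGraph where
  V := G.V ∪ G'.V
  E := G.E ∪ G'.E
  b := fun v => G.b v + G'.b v
  c := fun e => G.c e + G'.c e

/-- The graph `(V, E ∖ {e₀}, b, c)`. -/
noncomputable def deleteEdge (G : PRGraph) (e₀ : ℕ × ℕ) : PRGraph where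
  V := G.V
  E := G.E.erase e₀
  b := G.b
  c := fun e => if e = e₀ then 0 else G.c e

/-- Multiply the weights of all outgoing edges of `u` by `x`. -/
noncomputable def scaleOut (G : PRGraph) (u : ℕ) (x : ℝ) : PRGraph where
  V := G.V
  E := G.E
  b := G.b
  c := fun e => if e.1 = u then x * G.c e else G.c e

/-- Edge compensation operation at node `u` with constant `x`: multiply the weights of the
non-loop outgoing edges of `u` by `x`, divide `b(u)` and the weights of the non-loop
incoming edges of `u` by `x`. -/
noncomputable def compensate (G : PRGraph) (u : ℕ) (x : ℝ) : PRGraph where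
  V := G.V
  E := G.E
  b := fun v => if v = u then G.b v / x else G.b v
  c := fun e =>
    if e = (u, u) then G.c e
    else if e.1 = u then x * G.c e
    else if e.2 = u then G.c e / x
    else G.c e

/-- Replace the node weights of `G` by `b'`. -/
def withB (G : PRGraph) (b' : ℕ → ℝ) : PRGraph := ⟨G.V, G.E, b', G.c⟩

/-- The graph `(V, E, x·b, c)`. -/
def scaleB (G : PRGraph) (x : ℝ) : PRGraph := G.withB (fun v => x * G.b v)

end PRGraph

/-- Proportional combining `C^F_{u→w}(G)`: scale the weights of the outgoing edges of `u` by
`F_u(G)/(F_u(G)+F_w(G))` and of `w` by `F_w(G)/(F_u(G)+F_w(G))`, then merge `u` into `w`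
(delete `u`, redirect its incoming and outgoing edges to `w`, summing weights of parallel
edges, and add `b(u)` to `b(w)`). -/
noncomputable def combine (F : PRGraph → ℕ → ℝ) (G : PRGraph) (u w : ℕ) : PRGraph :=
  let m : ℕ → ℕ := fun x => if x = u then w else x
  let scale : ℕ × ℕ → ℝ := fun e =>
    (if e.1 = u then F G u / (F G u + F G w)
     else if e.1 = w then F G w / (F G u + F G w) else 1) * G.c e
  { V := G.V.erase u
    E := G.E.image (fun e => (m e.1, m e.2))
    b := fun v => if v = u then 0 else if v = w then G.b u + G.b w else G.b v
    c := fun e' =>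
      if e' ∈ G.E.image (fun e => (m e.1, m e.2)) then
        ∑ e ∈ G.E.filter (fun e => (m e.1, m e.2) = e'), scale e
      else 0 }

/-- Locality (LOC), relative to the domain class `D`. -/
def LOC (D : PRGraph → Prop) (F : PRGraph → ℕ → ℝ) : Prop :=
  ∀ G G' : PRGraph, Disjoint G.V G'.V → D G → D G' → D (G.gsum G') →
    ∀ v ∈ G.V, F (G.gsum G') v = F G v

/-- Edge Deletion (ED), relative to the domain class `D`. -/
def ED (D : PRGraph → Prop) (F : PRGraph → ℕ → ℝ) : Prop :=
  ∀ G : PRGraph, D G → ∀ e ∈ G.E, D (G.deleteEdge e) →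
    ∀ v ∈ G.V, ¬ G.Succ e.1 v → F (G.deleteEdge e) v = F G v

/-- Node Combination (NC), relative to the domain class `D`. -/
def NC (D : PRGraph → Prop) (F : PRGraph → ℕ → ℝ) : Prop :=
  ∀ G : PRGraph, D G → ∀ u ∈ G.V, ∀ w ∈ G.V, u ≠ w →
    G.degOut u = G.degOut w →
    (∀ s, G.Succ u s ∨ G.Succ w s → G.degOut s = G.degOut u) →
    D (combine F G u w) →
    (∀ v ∈ G.V, v ≠ u → v ≠ w → F (combine F G u w) v = F G v) ∧
    F (combine F G u w) w = F G u + F G w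

/-- Edge Multiplication (EM), relative to the domain class `D`. -/
def EM (D : PRGraph → Prop) (F : PRGraph → ℕ → ℝ) : Prop :=
  ∀ G : PRGraph, D G → ∀ u ∈ G.V, ∀ x : ℝ, 0 < x → D (G.scaleOut u x) →
    ∀ v ∈ G.V, F (G.scaleOut u x) v = F G v

/-- Edge Compensation (EC), relative to the domain class `D`. -/
def EC (D : PRGraph → Prop) (F : PRGraph → ℕ → ℝ) : Prop :=
  ∀ G : PRGraph, D G → ∀ u ∈ G.V, ∀ x : ℝ, 0 < x → D (G.compensate u x) →
    (∀ v ∈ G.V, v ≠ u → F (G.compensate u x) v = F G v) ∧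
    F (G.compensate u x) u = F G u / x

/-- Baseline (BL), relative to the domain class `D`. -/
def BL (D : PRGraph → Prop) (F : PRGraph → ℕ → ℝ) : Prop :=
  ∀ G : PRGraph, D G → ∀ v ∈ G.V, (∀ e ∈ G.E, e.1 ≠ v ∧ e.2 ≠ v) → F G v = G.b v

/-- A cycle graph: strongly connected, and every node has exactly one outgoing edge. -/
def IsCycleGraph (G : PRGraph) : Prop :=
  G.StronglyConnected ∧ ∀ v ∈ G.V, (G.E.filter (fun e => e.1 = v)).card = 1

/-- Cycle (CY), relative to the domain class `D`. -/
def CY (D : PRGraph → Prop) (F : PRGraph → ℕ → ℝ) : Prop :=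
  ∀ G : PRGraph, D G → IsCycleGraph G → (∀ e ∈ G.E, ∀ e' ∈ G.E, G.c e = G.c e') →
    ∀ v ∈ G.V, F G v = (∑ u ∈ G.V, G.b u) / (G.V.card : ℝ)

/-- The three-node graph used to define the profit function: nodes `{0,1,2}` (as `u,v,w`),
an edge `(u,v)` of weight `y`, an edge `(u,w)` of weight `z-y` if `y < z` (no such edge
if `y = z`), `b(u) = x` and `b(v) = b(w) = 0`. -/
noncomputable def profitGraph (x y z : ℝ) : PRGraph where
  V := {0, 1, 2}
  E := if y < z then {(0, 1), (0, 2)} else {(0, 1)}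
  b := fun v => if v = 0 then x else 0
  c := fun e => if e = (0, 1) then y else if e = (0, 2) ∧ y < z then z - y else 0

/-- The profit function `p_F(x,y,z)` of a centrality measure `F`. -/
noncomputable def profit (F : PRGraph → ℕ → ℝ) (x y z : ℝ) : ℝ := F (profitGraph x y z) 1

/-!
PageRank is the unique solution on `V` of the fixed-point equation `x = b + x M`, where
`M s v = a c(s,v) / deg⁺(s)`: the distributed process is the walk expansion of its Neumann series,
which converges because every row of `M` sums to at most `a < 1`. Locality, Edge Deletion and Edge
Multiplication are read off the walk expansion: a walk of `G + G'` ending in `G` stays in `G`, a walk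
ending at a non-successor of `u` never uses an out-edge of `u`, and scaling the out-edges of a node leaves `M`
unchanged. Baseline is the equation at a node without in-edges. For Node Combination, when
`deg⁺ u = deg⁺ w` the proportional factors make the merged node `w` pass on exactly what `u` and
`w` passed on before, so `PR(G)` with the values at `u` and `w` added solves the equation of the
combined graph and by uniqueness is its PageRank.
-/

open Finset

namespace PRGraph

variable {F : PRGraph → ℕ → ℝ} {G G' : PRGraph} {a : ℝ} {t u v w s : ℕ}

theorem Valid.fst_mem (hG : G.Valid) {e : ℕ × ℕ} (he : e ∈ G.E) : e.1 ∈ G.V := (hG.1 e he).1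

theorem Valid.snd_mem (hG : G.Valid) {e : ℕ × ℕ} (he : e ∈ G.E) : e.2 ∈ G.V := (hG.1 e he).2

theorem Valid.b_nonneg (hG : G.Valid) (v : ℕ) : 0 ≤ G.b v := hG.2.1 v

theorem Valid.b_eq_zero (hG : G.Valid) (hv : v ∉ G.V) : G.b v = 0 := hG.2.2.1 v hv

theorem Valid.c_eq_zero (hG : G.Valid) {e : ℕ × ℕ} (he : e ∉ G.E) : G.c e = 0 := hG.2.2.2.2 e he

theorem Valid.c_eq_zero_of_fst_not_mem (hG : G.Valid) {e : ℕ × ℕ} (he : e.1 ∉ G.V) :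
    G.c e = 0 :=
  hG.c_eq_zero fun h => he (hG.fst_mem h)

theorem Valid.c_nonneg (hG : G.Valid) (e : ℕ × ℕ) : 0 ≤ G.c e := by
  by_cases he : e ∈ G.E
  · exact (hG.2.2.2.1 e he).le
  · exact (hG.c_eq_zero he).ge

theorem Valid.degOut_nonneg (hG : G.Valid) (v : ℕ) : 0 ≤ G.degOut v :=
  sum_nonneg fun e _ => hG.c_nonneg e

theorem Valid.sum_mul_c_eq_sum_filter_snd (hG : G.Valid) (f : ℕ → ℝ) (v : ℕ) :
    ∑ s ∈ G.V, f s * G.c (s, v) = ∑ e ∈ G.E with e.2 = v, f e.1 * G.c e := by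
  rw [← sum_filter_of_ne (p := fun s => (s, v) ∈ G.E) fun s _ h => by
    by_contra hs; exact h (by rw [hG.c_eq_zero hs, mul_zero])]
  refine sum_nbij' (fun s => (s, v)) Prod.fst ?_ ?_ (fun _ _ => rfl) ?_ (fun _ _ => rfl)
  · intro s hs
    simp_all
  · intro e he
    obtain ⟨heE, rfl⟩ := mem_filter.mp he
    simpa [hG.fst_mem heE] using heE
  · intro e he
    obtain ⟨-, rfl⟩ := mem_filter.mp he
    rfl

theorem Valid.degOut_eq_sum (hG : G.Valid) (s : ℕ) : G.degOut s = ∑ v ∈ G.V, G.c (s, v) := by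
  rw [degOut, ← sum_filter_of_ne (p := fun v => (s, v) ∈ G.E) fun v _ h => by
    by_contra hv; exact h (hG.c_eq_zero hv)]
  refine sum_nbij' Prod.snd (fun v => (s, v)) ?_ ?_ ?_ (fun _ _ => rfl) ?_
  · intro e he
    obtain ⟨heE, rfl⟩ := mem_filter.mp he
    simpa [hG.snd_mem heE] using heE
  · intro v hv
    simp_all
  all_goals
    intro e he
    obtain ⟨-, rfl⟩ := mem_filter.mp he
    rfl

noncomputable def transition (a : ℝ) (G : PRGraph) (s v : ℕ) : ℝ := a * G.c (s, v) / G.degOut s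

theorem transition_nonneg (hG : G.Valid) (ha : 0 ≤ a) (s v : ℕ) : 0 ≤ G.transition a s v :=
  div_nonneg (mul_nonneg ha (hG.c_nonneg _)) (hG.degOut_nonneg s)

theorem transition_eq_zero (hG : G.Valid) (h : (s, v) ∉ G.E) : G.transition a s v = 0 := by
  rw [transition, hG.c_eq_zero h, mul_zero, zero_div]

theorem sum_transition_le (hG : G.Valid) (ha : 0 ≤ a) (s : ℕ) :
    ∑ v ∈ G.V, G.transition a s v ≤ a := by
  simp only [transition]
  rw [← sum_div, ← mul_sum, ← hG.degOut_eq_sum]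
  rcases eq_or_ne (G.degOut s) 0 with h | h
  · rw [h, div_zero]; exact ha
  · rw [mul_div_cancel_right₀ _ h]

theorem sum_mul_transition (hG : G.Valid) (x : ℕ → ℝ) (v : ℕ) :
    ∑ s ∈ G.V, x s * G.transition a s v
      = ∑ e ∈ G.E with e.2 = v, x e.1 * a / G.degOut e.1 * G.c e := by
  rw [← hG.sum_mul_c_eq_sum_filter_snd (fun s => x s * a / G.degOut s)]
  exact sum_congr rfl fun s _ => by simp only [transition]; ring

def walksTo (G : PRGraph) (t v : ℕ) : Finset (Fin (t + 1) → ℕ) :=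
  (Fintype.piFinset fun _ => G.V).filter
    fun ω => ω (Fin.last t) = v ∧ ∀ i : Fin t, (ω i.castSucc, ω i.succ) ∈ G.E

noncomputable def walkWeight (a : ℝ) (G : PRGraph) (ω : Fin (t + 1) → ℕ) : ℝ :=
  G.b (ω 0) * ∏ i : Fin t, G.transition a (ω i.castSucc) (ω i.succ)

theorem pProc_eq_sum_walkWeight :
    G.pProc a t v = ∑ ω ∈ G.walksTo t v, G.walkWeight a ω := rfl

theorem mem_walksTo {ω : Fin (t + 1) → ℕ} : ω ∈ G.walksTo t v ↔
    (∀ i, ω i ∈ G.V) ∧ ω (Fin.last t) = v ∧ ∀ i : Fin t, (ω i.castSucc, ω i.succ) ∈ G.E := by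
  simp [walksTo]

theorem walksTo_zero (hv : v ∈ G.V) : G.walksTo 0 v = {fun _ => v} := by
  ext ω
  rw [mem_walksTo, mem_singleton]
  constructor
  · rintro ⟨-, hlast, -⟩
    funext i
    rwa [Subsingleton.elim (α := Fin 1) i (Fin.last 0)]
  · rintro rfl
    exact ⟨fun _ => hv, rfl, fun i => i.elim0⟩

theorem snoc_mem_walksTo (hG : G.Valid) {ω : Fin (t + 1) → ℕ} (hω : ω ∈ G.walksTo t s)
    (hsv : (s, v) ∈ G.E) : (Fin.snoc ω v : Fin (t + 2) → ℕ) ∈ G.walksTo (t + 1) v := by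
  obtain ⟨hV, rfl, hE⟩ := mem_walksTo.mp hω
  refine mem_walksTo.mpr ⟨Fin.lastCases ?_ ?_, by simp, Fin.lastCases ?_ ?_⟩
  · simpa using hG.snd_mem hsv
  · simpa using hV
  · simpa using hsv
  · intro i
    rw [Fin.succ_castSucc, Fin.snoc_castSucc, Fin.snoc_castSucc]
    exact hE i

theorem init_mem_walksTo {ω : Fin (t + 2) → ℕ} (hω : ω ∈ G.walksTo (t + 1) v) :
    Fin.init ω ∈ G.walksTo t (ω (Fin.last t).castSucc) ∧ (ω (Fin.last t).castSucc, v) ∈ G.E := by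
  obtain ⟨hV, rfl, hE⟩ := mem_walksTo.mp hω
  refine ⟨mem_walksTo.mpr ⟨fun i => hV _, rfl, fun i => ?_⟩, by simpa using hE (Fin.last t)⟩
  have := hE i.castSucc
  rwa [Fin.succ_castSucc] at this

theorem walkWeight_snoc (ω : Fin (t + 1) → ℕ) (v : ℕ) :
    G.walkWeight a (Fin.snoc ω v : Fin (t + 2) → ℕ)
      = G.walkWeight a ω * G.transition a (ω (Fin.last t)) v := by
  simp only [walkWeight, Fin.prod_univ_castSucc, Fin.succ_castSucc, Fin.snoc_castSucc,
    Fin.succ_last, Fin.snoc_last, mul_assoc]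
  rfl

theorem pProc_zero (hv : v ∈ G.V) : G.pProc a 0 v = G.b v := by
  simp [pProc_eq_sum_walkWeight, walksTo_zero hv, walkWeight]

theorem pProc_succ (hG : G.Valid) (t v : ℕ) :
    G.pProc a (t + 1) v = ∑ s ∈ G.V, G.pProc a t s * G.transition a s v := by
  rw [← sum_filter_of_ne (p := fun s => (s, v) ∈ G.E) fun s _ h => by
    by_contra hs; exact h (by rw [transition_eq_zero hG hs, mul_zero])]
  simp only [pProc_eq_sum_walkWeight, sum_mul]
  rw [sum_sigma']
  symm
  refine sum_nbij' (fun p => Fin.snoc p.2 v) (fun ω => ⟨ω (Fin.last t).castSucc, Fin.init ω⟩)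
    ?_ ?_ ?_ ?_ ?_
  · rintro ⟨s, ω⟩ h
    obtain ⟨hs, hω⟩ := mem_sigma.mp h
    exact snoc_mem_walksTo hG hω (mem_filter.mp hs).2
  · intro ω hω
    obtain ⟨hinit, hE⟩ := init_mem_walksTo hω
    exact mem_sigma.mpr ⟨mem_filter.mpr ⟨(mem_walksTo.mp hω).1 _, hE⟩, hinit⟩
  · rintro ⟨s, ω⟩ h
    have hs : ω (Fin.last t) = s := (mem_walksTo.mp (mem_sigma.mp h).2).2.1
    simp [hs]
  · intro ω hω
    obtain rfl := (mem_walksTo.mp hω).2.1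
    exact Fin.snoc_init_self ω
  · rintro ⟨s, ω⟩ h
    have hs : ω (Fin.last t) = s := (mem_walksTo.mp (mem_sigma.mp h).2).2.1
    simp only [walkWeight_snoc, hs]

theorem pProc_nonneg (hG : G.Valid) (ha : 0 ≤ a) (t v : ℕ) : 0 ≤ G.pProc a t v :=
  sum_nonneg fun _ _ =>
    mul_nonneg (hG.b_nonneg _) (prod_nonneg fun _ _ => transition_nonneg hG ha _ _)

theorem sum_pProc_le (hG : G.Valid) (ha : 0 ≤ a) (t : ℕ) :
    ∑ v ∈ G.V, G.pProc a t v ≤ a ^ t * ∑ v ∈ G.V, G.b v := by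
  induction t with
  | zero => simp [sum_congr rfl fun v hv => pProc_zero (a := a) hv]
  | succ t ih =>
    calc ∑ v ∈ G.V, G.pProc a (t + 1) v
        = ∑ s ∈ G.V, G.pProc a t s * ∑ v ∈ G.V, G.transition a s v := by
          simp only [pProc_succ hG, mul_sum]
          exact sum_comm
      _ ≤ ∑ s ∈ G.V, G.pProc a t s * a :=
          sum_le_sum fun s _ =>
            mul_le_mul_of_nonneg_left (sum_transition_le hG ha s) (pProc_nonneg hG ha t s)
      _ = a * ∑ s ∈ G.V, G.pProc a t s := by rw [← sum_mul, mul_comm]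
      _ ≤ a * (a ^ t * ∑ v ∈ G.V, G.b v) := mul_le_mul_of_nonneg_left ih ha
      _ = a ^ (t + 1) * ∑ v ∈ G.V, G.b v := by ring

theorem summable_pProc (hG : G.Valid) (ha0 : 0 ≤ a) (ha1 : a < 1) (hv : v ∈ G.V) :
    Summable fun t => G.pProc a t v :=
  Summable.of_nonneg_of_le (pProc_nonneg hG ha0 · v)
    (fun t => (single_le_sum (fun s _ => pProc_nonneg hG ha0 t s) hv).trans
      (sum_pProc_le hG ha0 t))
    ((summable_geometric_of_lt_one ha0 ha1).mul_right _)

theorem PageRank_nonneg (hG : G.Valid) (ha : 0 ≤ a) (v : ℕ) : 0 ≤ G.PageRank a v :=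
  tsum_nonneg (pProc_nonneg hG ha · v)

def IsPageRankSolution (a : ℝ) (G : PRGraph) (x : ℕ → ℝ) : Prop :=
  ∀ v ∈ G.V, x v = G.b v + ∑ s ∈ G.V, x s * G.transition a s v

theorem isPageRankSolution_PageRank (hG : G.Valid) (ha0 : 0 ≤ a) (ha1 : a < 1) :
    IsPageRankSolution a G (G.PageRank a) := by
  intro v hv
  rw [PageRank, (summable_pProc hG ha0 ha1 hv).tsum_eq_zero_add, pProc_zero hv]
  congr 1
  calc ∑' t, G.pProc a (t + 1) v
      = ∑' t, ∑ s ∈ G.V, G.pProc a t s * G.transition a s v := tsum_congr (pProc_succ hG · v)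
    _ = ∑ s ∈ G.V, ∑' t, G.pProc a t s * G.transition a s v :=
        Summable.tsum_finsetSum fun s hs => (summable_pProc hG ha0 ha1 hs).mul_right _
    _ = ∑ s ∈ G.V, G.PageRank a s * G.transition a s v :=
        sum_congr rfl fun s _ => tsum_mul_right

/-- The equation is a contraction with constant `a` in the `ℓ¹` norm on `V`. -/
theorem IsPageRankSolution.eqOn (hG : G.Valid) (ha0 : 0 ≤ a) (ha1 : a < 1) {x y : ℕ → ℝ}
    (hx : IsPageRankSolution a G x) (hy : IsPageRankSolution a G y) : Set.EqOn x y G.V := by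
  have hdiff : ∀ v ∈ G.V, x v - y v = ∑ s ∈ G.V, (x s - y s) * G.transition a s v := by
    intro v hv
    rw [hx v hv, hy v hv, add_sub_add_left_eq_sub, ← sum_sub_distrib]
    simp only [sub_mul]
  have hle : ∑ v ∈ G.V, |x v - y v| ≤ a * ∑ v ∈ G.V, |x v - y v| :=
    calc ∑ v ∈ G.V, |x v - y v|
        ≤ ∑ v ∈ G.V, ∑ s ∈ G.V, |x s - y s| * G.transition a s v :=
          sum_le_sum fun v hv => by
            rw [hdiff v hv]
            refine (abs_sum_le_sum_abs _ _).trans_eq (sum_congr rfl fun s _ => ?_)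
            rw [abs_mul, abs_of_nonneg (transition_nonneg hG ha0 s v)]
      _ = ∑ s ∈ G.V, |x s - y s| * ∑ v ∈ G.V, G.transition a s v := by
          rw [sum_comm]
          simp only [mul_sum]
      _ ≤ ∑ s ∈ G.V, |x s - y s| * a :=
          sum_le_sum fun s _ =>
            mul_le_mul_of_nonneg_left (sum_transition_le hG ha0 s) (abs_nonneg _)
      _ = a * ∑ v ∈ G.V, |x v - y v| := by rw [← sum_mul, mul_comm]
  have hzero : ∑ v ∈ G.V, |x v - y v| = 0 :=
    le_antisymm (by nlinarith [sum_nonneg fun v (_ : v ∈ G.V) => abs_nonneg (x v - y v)])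
      (sum_nonneg fun v _ => abs_nonneg _)
  intro v hv
  exact sub_eq_zero.mp (abs_eq_zero.mp ((sum_eq_zero_iff_of_nonneg fun _ _ => abs_nonneg _).mp
    hzero v hv))

theorem bl_PageRank (ha0 : 0 ≤ a) (ha1 : a < 1) : BL Valid (PageRank a) := by
  intro G hG v hv hv_isolated
  rw [isPageRankSolution_PageRank hG ha0 ha1 v hv, add_eq_left]
  exact sum_eq_zero fun s _ => by
    rw [transition_eq_zero hG fun h => (hv_isolated _ h).2 rfl, mul_zero]

theorem scaleOut_c (G : PRGraph) (u : ℕ) (x : ℝ) (e : ℕ × ℕ) :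
    (G.scaleOut u x).c e = if e.1 = u then x * G.c e else G.c e := rfl

theorem degOut_scaleOut (G : PRGraph) (u : ℕ) (x : ℝ) (s : ℕ) :
    (G.scaleOut u x).degOut s = if s = u then x * G.degOut s else G.degOut s := by
  split_ifs with h
  · rw [degOut, degOut, mul_sum]
    exact sum_congr rfl fun e he => if_pos ((mem_filter.mp he).2.trans h)
  · exact sum_congr rfl fun e he => if_neg ((mem_filter.mp he).2.symm ▸ h)

theorem transition_scaleOut {x : ℝ} (hx : x ≠ 0) (s v : ℕ) :
    (G.scaleOut u x).transition a s v = G.transition a s v := by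
  simp only [transition, degOut_scaleOut, scaleOut_c]
  split_ifs
  · rw [mul_left_comm, mul_div_mul_left _ _ hx]
  · rfl

theorem em_PageRank : EM Valid (PageRank a) := by
  intro G _ u _ x hx _ v _
  refine tsum_congr fun t => ?_
  simp only [pProc_eq_sum_walkWeight, walkWeight, transition_scaleOut hx.ne']
  rfl

theorem gsum_b (G G' : PRGraph) (v : ℕ) : (G.gsum G').b v = G.b v + G'.b v := rfl

theorem gsum_c (G G' : PRGraph) (e : ℕ × ℕ) : (G.gsum G').c e = G.c e + G'.c e := rfl

theorem degOut_gsum_of_not_mem (hG' : G'.Valid) (hs : s ∉ G'.V) :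
    (G.gsum G').degOut s = G.degOut s := by
  have hE : G'.E.filter (·.1 = s) = ∅ :=
    filter_eq_empty_iff.mpr fun e he h => hs (h ▸ hG'.fst_mem he)
  simp only [degOut, gsum, filter_union, hE, union_empty]
  refine sum_congr rfl fun e he => ?_
  rw [hG'.c_eq_zero_of_fst_not_mem ((mem_filter.mp he).2 ▸ hs), add_zero]

theorem transition_gsum_of_not_mem (hG' : G'.Valid) (hs : s ∉ G'.V) (v : ℕ) :
    (G.gsum G').transition a s v = G.transition a s v := by
  simp only [transition, degOut_gsum_of_not_mem hG' hs, gsum_c,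
    hG'.c_eq_zero_of_fst_not_mem (e := (s, v)) hs, add_zero]

theorem walksTo_gsum (hG : G.Valid) (hG' : G'.Valid) (hdis : Disjoint G.V G'.V)
    (hv : v ∈ G.V) : (G.gsum G').walksTo t v = G.walksTo t v := by
  have edge_left : ∀ e ∈ G.E ∪ G'.E, e.2 ∈ G.V → e ∈ G.E := fun e he h2 =>
    (mem_union.mp he).resolve_right fun h' => disjoint_left.mp hdis h2 (hG'.snd_mem h')
  ext ω
  simp only [mem_walksTo]
  constructor
  · rintro ⟨-, hlast, hE⟩
    have hV : ∀ i, ω i ∈ G.V :=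
      Fin.reverseInduction (hlast ▸ hv) fun i hi => hG.fst_mem (edge_left _ (hE i) hi)
    exact ⟨hV, hlast, fun i => edge_left _ (hE i) (hV _)⟩
  · rintro ⟨hV, hlast, hE⟩
    exact ⟨fun i => mem_union_left _ (hV i), hlast, fun i => mem_union_left _ (hE i)⟩

theorem loc_PageRank : LOC Valid (PageRank a) := by
  intro G G' hdis hG hG' _ v hv
  refine tsum_congr fun t => ?_
  rw [pProc_eq_sum_walkWeight, pProc_eq_sum_walkWeight, walksTo_gsum hG hG' hdis hv]
  refine sum_congr rfl fun ω hω => ?_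
  have hω' : ∀ i, ω i ∉ G'.V := fun i => disjoint_left.mp hdis ((mem_walksTo.mp hω).1 i)
  simp only [walkWeight, transition_gsum_of_not_mem hG' (hω' _), gsum_b, hG'.b_eq_zero (hω' 0),
    add_zero]

theorem Succ.of_mem_E (h : (u, v) ∈ G.E) : G.Succ u v :=
  ⟨1, fun k => if k = 0 then u else v, ⟨le_rfl, fun i hi => by simpa [Nat.lt_one_iff.mp hi]⟩,
    rfl, rfl⟩

theorem Succ.cons (h : (u, v) ∈ G.E) (hvw : G.Succ v w) : G.Succ u w := by
  obtain ⟨t, ω, ⟨-, hω⟩, h0, ht⟩ := hvw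
  refine ⟨t + 1, fun k => if k = 0 then u else ω (k - 1), ⟨by omega, fun i hi => ?_⟩, rfl,
    by simpa using ht⟩
  rcases i with _ | i
  · simpa [h0] using h
  · simpa using hω i (by omega)

theorem succ_of_mem_walksTo {ω : Fin (t + 1) → ℕ} (hω : ω ∈ G.walksTo t v) (i : Fin t) :
    G.Succ (ω i.castSucc) v := by
  obtain ⟨-, hlast, hE⟩ := mem_walksTo.mp hω
  have step : ∀ i : Fin t, ω i.succ = v ∨ G.Succ (ω i.succ) v → G.Succ (ω i.castSucc) v :=
    fun i h => h.elim (fun h => Succ.of_mem_E (h ▸ hE i)) (Succ.cons (hE i))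
  have reach : ∀ j, ω j = v ∨ G.Succ (ω j) v :=
    Fin.reverseInduction (Or.inl hlast) fun i h => Or.inr (step i h)
  exact step i (reach i.succ)

theorem deleteEdge_c (G : PRGraph) (e₀ e : ℕ × ℕ) :
    (G.deleteEdge e₀).c e = if e = e₀ then 0 else G.c e := rfl

theorem degOut_deleteEdge_of_ne {e : ℕ × ℕ} (hs : s ≠ e.1) :
    (G.deleteEdge e).degOut s = G.degOut s := by
  have he : e ∉ G.E.filter (·.1 = s) := fun h => hs (mem_filter.mp h).2.symm
  simp only [degOut, deleteEdge, filter_erase, erase_eq_of_notMem he]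
  refine sum_congr rfl fun e' he' => if_neg ?_
  rintro rfl
  exact he he'

theorem transition_deleteEdge_of_ne {e : ℕ × ℕ} (hs : s ≠ e.1) (v : ℕ) :
    (G.deleteEdge e).transition a s v = G.transition a s v := by
  simp only [transition, degOut_deleteEdge_of_ne hs, deleteEdge_c,
    if_neg fun h : (s, v) = e => hs (congrArg Prod.fst h)]

theorem walksTo_deleteEdge {e : ℕ × ℕ} (hv : ¬ G.Succ e.1 v) :
    (G.deleteEdge e).walksTo t v = G.walksTo t v := by
  ext ω
  constructor
  · intro hω
    obtain ⟨hV, hlast, hE⟩ := mem_walksTo.mp hω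
    exact mem_walksTo.mpr ⟨hV, hlast, fun i => mem_of_mem_erase (hE i)⟩
  · intro hω
    obtain ⟨hV, hlast, hE⟩ := mem_walksTo.mp hω
    refine mem_walksTo.mpr ⟨hV, hlast, fun i => mem_erase.mpr ⟨fun h => hv ?_, hE i⟩⟩
    simpa [← h] using succ_of_mem_walksTo hω i

theorem ed_PageRank : ED Valid (PageRank a) := by
  intro G _ e _ _ v _ hv
  refine tsum_congr fun t => ?_
  rw [pProc_eq_sum_walkWeight, pProc_eq_sum_walkWeight, walksTo_deleteEdge hv]
  refine sum_congr rfl fun ω hω => ?_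
  have hne : ∀ i : Fin t, ω i.castSucc ≠ e.1 := fun i h => hv (h ▸ succ_of_mem_walksTo hω i)
  simp only [walkWeight, transition_deleteEdge_of_ne (hne _)]
  rfl

def mergeNode (u w x : ℕ) : ℕ := if x = u then w else x

noncomputable def combineFactor (F : PRGraph → ℕ → ℝ) (G : PRGraph) (u w s : ℕ) : ℝ :=
  if s = u then F G u / (F G u + F G w) else if s = w then F G w / (F G u + F G w) else 1

noncomputable def mergeValue (u w : ℕ) (x : ℕ → ℝ) (v : ℕ) : ℝ :=
  if v = w then x u + x w else x v

theorem filter_mergeNode_of_ne {α : Type*} (s : Finset α) (π : α → ℕ) (hvu : v ≠ u)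
    (hvw : v ≠ w) : s.filter (fun x => mergeNode u w (π x) = v) = s.filter (π · = v) :=
  filter_congr fun x _ => by
    unfold mergeNode
    split_ifs with h
    · simp [h, Ne.symm hvu, Ne.symm hvw]
    · rfl

theorem sum_filter_mergeNode_eq_self {α : Type*} (huw : u ≠ w) (s : Finset α) (π : α → ℕ)
    (f : α → ℝ) : ∑ x ∈ s with mergeNode u w (π x) = w, f x
      = ∑ x ∈ s with π x = u, f x + ∑ x ∈ s with π x = w, f x := by
  rw [← sum_union (disjoint_filter.mpr fun x _ h h' => huw (h.symm.trans h')), ← filter_or]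
  congr 1
  refine filter_congr fun x _ => ?_
  unfold mergeNode
  split_ifs with h <;> simp [h, huw]

theorem combine_b (v : ℕ) : (combine F G u w).b v
    = if v = u then 0 else if v = w then G.b u + G.b w else G.b v := rfl

theorem combine_c (e' : ℕ × ℕ) : (combine F G u w).c e'
    = ∑ e ∈ G.E with (mergeNode u w e.1, mergeNode u w e.2) = e',
        combineFactor F G u w e.1 * G.c e := by
  change ite _ _ 0 = _
  split_ifs with h
  · rfl
  · refine (sum_eq_zero fun e he => absurd ?_ h).symm
    exact mem_image.mpr ⟨e, (mem_filter.mp he).1, (mem_filter.mp he).2⟩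

theorem sum_filter_mul_combine_c (P : ℕ × ℕ → Prop) [DecidablePred P] (g : ℕ × ℕ → ℝ) :
    ∑ e' ∈ (combine F G u w).E with P e', g e' * (combine F G u w).c e'
      = ∑ e ∈ G.E with P (mergeNode u w e.1, mergeNode u w e.2),
          g (mergeNode u w e.1, mergeNode u w e.2) * (combineFactor F G u w e.1 * G.c e) := by
  rw [show (combine F G u w).E = G.E.image fun e => (mergeNode u w e.1, mergeNode u w e.2)
    from rfl, filter_image]
  refine sum_image' _ fun e he => ?_
  rw [combine_c, mul_sum, filter_filter]
  refine sum_congr (filter_congr fun x _ => ?_) fun x hx => by rw [(mem_filter.mp hx).2.2]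
  exact ⟨fun h => ⟨h ▸ (mem_filter.mp he).2, h⟩, fun h => h.2⟩

theorem degOut_combine (s : ℕ) : (combine F G u w).degOut s
    = ∑ e ∈ G.E with mergeNode u w e.1 = s, combineFactor F G u w e.1 * G.c e := by
  rw [degOut]
  simpa using sum_filter_mul_combine_c (F := F) (G := G) (u := u) (w := w) (fun e => e.1 = s) fun _ => 1

theorem degOut_combine_of_ne {s : ℕ} (hsu : s ≠ u) (hsw : s ≠ w) :
    (combine F G u w).degOut s = G.degOut s := by
  rw [degOut_combine, filter_mergeNode_of_ne _ Prod.fst hsu hsw]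
  refine sum_congr rfl fun e he => ?_
  rw [(mem_filter.mp he).2, combineFactor, if_neg hsu, if_neg hsw, one_mul]

theorem degOut_combine_self (huw : u ≠ w) : (combine F G u w).degOut w
    = combineFactor F G u w u * G.degOut u + combineFactor F G u w w * G.degOut w := by
  rw [degOut_combine, sum_filter_mergeNode_eq_self huw, degOut, degOut, mul_sum, mul_sum]
  congr 1 <;> exact sum_congr rfl fun e he => by rw [(mem_filter.mp he).2]

/-- Per unit of edge weight, the merged node passes on exactly the centrality the original
endpoint passed on: the factors redistribute `F u + F w` back in proportion. -/
theorem mergeValue_mul_combineFactor_div (huw : u ≠ w) (hdeg : G.degOut u = G.degOut w)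
    (hFu : 0 ≤ F G u) (hFw : 0 ≤ F G w) (s : ℕ) :
    mergeValue u w (F G) (mergeNode u w s) * combineFactor F G u w s
        / (combine F G u w).degOut (mergeNode u w s) = F G s / G.degOut s := by
  by_cases hs : s = u ∨ s = w
  · have hms : mergeNode u w s = w := by
      unfold mergeNode; split_ifs with h
      · rfl
      · exact hs.resolve_left h
    rw [hms, degOut_combine_self huw]
    by_cases hP : F G u + F G w = 0
    · have hu0 : F G u = 0 := by linarith
      have hw0 : F G w = 0 := by linarith
      rcases hs with rfl | rfl <;> simp [mergeValue, hu0, hw0]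
    · rcases hs with rfl | rfl <;>
        simp only [mergeValue, combineFactor, if_pos, if_neg huw, if_neg huw.symm, ← hdeg] <;>
        field_simp
  · rw [not_or] at hs
    simp [mergeNode, mergeValue, combineFactor, hs.1, hs.2, degOut_combine_of_ne hs.1 hs.2]

theorem isPageRankSolution_combine (hG : G.Valid) (hH : (combine F G u w).Valid)
    (hu : u ∈ G.V) (hw : w ∈ G.V) (huw : u ≠ w) (hdeg : G.degOut u = G.degOut w)
    (hFu : 0 ≤ F G u) (hFw : 0 ≤ F G w) (hF : IsPageRankSolution a G (F G)) :
    IsPageRankSolution a (combine F G u w) (mergeValue u w (F G)) := by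
  have hin : ∀ y ∈ G.V,
      F G y - G.b y = ∑ e ∈ G.E with e.2 = y, F G e.1 * a / G.degOut e.1 * G.c e := by
    intro y hy
    rw [hF y hy, sum_mul_transition hG, add_sub_cancel_left]
  intro v hv
  obtain ⟨hvu, hvV⟩ := mem_erase.mp hv
  have hsum : ∑ s ∈ (combine F G u w).V,
      mergeValue u w (F G) s * (combine F G u w).transition a s v
        = ∑ e ∈ G.E with mergeNode u w e.2 = v, F G e.1 * a / G.degOut e.1 * G.c e := by
    rw [sum_mul_transition hH, sum_filter_mul_combine_c]
    refine sum_congr rfl fun e _ => ?_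
    have h := mergeValue_mul_combineFactor_div huw hdeg hFu hFw e.1
    calc _ = a * G.c e * (mergeValue u w (F G) (mergeNode u w e.1) * combineFactor F G u w e.1
            / (combine F G u w).degOut (mergeNode u w e.1)) := by ring
      _ = _ := by rw [h]; ring
  rw [hsum]
  by_cases hvw : v = w
  · subst hvw
    rw [sum_filter_mergeNode_eq_self huw, ← hin u hu, ← hin v hw, combine_b, if_neg hvu,
      if_pos rfl, mergeValue, if_pos rfl]
    ring
  · rw [filter_mergeNode_of_ne _ _ hvu hvw, ← hin v hvV, combine_b, if_neg hvu, if_neg hvw,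
      mergeValue, if_neg hvw]
    ring

theorem nc_PageRank (ha0 : 0 ≤ a) (ha1 : a < 1) : NC Valid (PageRank a) := by
  intro G hG u hu w hw huw hdeg _ hH
  have hmerge := (isPageRankSolution_PageRank hH ha0 ha1).eqOn hH ha0 ha1
    (isPageRankSolution_combine hG hH hu hw huw hdeg (PageRank_nonneg hG ha0 u)
      (PageRank_nonneg hG ha0 w) (isPageRankSolution_PageRank hG ha0 ha1))
  refine ⟨fun v hv hvu hvw => ?_, ?_⟩
  · exact (hmerge (mem_erase.mpr ⟨hvu, hv⟩)).trans (if_neg hvw)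
  · exact (hmerge (mem_erase.mpr ⟨huw.symm, hw⟩)).trans (if_pos rfl)

end PRGraph

/-- For every decay factor `a ∈ [0,1)`, PageRank `PR^a`, defined on the class
`𝒢` of all graphs, satisfies LOC, ED, NC, EM and BL. -/
theorem pagerank_satisfies_axioms (a : ℝ) (ha0 : 0 ≤ a) (ha1 : a < 1) :
    LOC PRGraph.Valid (PRGraph.PageRank a) ∧ ED PRGraph.Valid (PRGraph.PageRank a) ∧
    NC PRGraph.Valid (PRGraph.PageRank a) ∧ EM PRGraph.Valid (PRGraph.PageRank a) ∧
    BL PRGraph.Valid (PRGraph.PageRank a) :=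
  ⟨PRGraph.loc_PageRank, PRGraph.ed_PageRank, PRGraph.nc_PageRank ha0 ha1, PRGraph.em_PageRank,
    PRGraph.bl_PageRank ha0 ha1⟩
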